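/- Let k be a commutative ring, B ⊆ A an extension of k-algebras with 1_B = 1_A, and let J_0 ⊆ J_1 ⊆ B be a chain of ideals of A contained in B. Then 1 ≤ d(B/J_1, A/J_1) ≤ d(B/J_0, A/J_0) ≤ d(B,A). -/

import Mathlib

/-! # Depth of subring extensions (Kadison–Young)
For a unital subring `B ⊆ A`, `CC B n` realizes the `n`-fold relative tensor power
`C_n(A,B) = A ⊗_B ⋯ ⊗_B A` (with `C_0(A,B) = B`) as a quotient of the iterated
tensor power over `ℤ` by the middle `B`-balancing relations, together with its
natural left/right `A`- and `B`-actions.  Bimodule maps, the divisibility relation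
`M ∣ q ⬝ N`, H-equivalence, the depth conditions and the minimum depth `d(B,A) ∈ ℕ∞`
are then defined exactly as in the paper. -/

open TensorProduct

universe u

variable (A : Type u) [Ring A]

/-- `Tpow A n` is the `(n+1)`-fold tensor power `A ⊗ℤ ⋯ ⊗ℤ A`. -/
noncomputable def Tpow : ℕ → ModuleCat.{u} ℤ
  | 0 => ModuleCat.of ℤ A
  | n + 1 => ModuleCat.of ℤ (A ⊗[ℤ] (Tpow n : Type u))

/-- Multiplication by `a : A` on the leftmost tensor factor. -/
noncomputable def lmulT (a : A) : ∀ n, (Tpow A n : Type u) →ₗ[ℤ] (Tpow A n : Type u)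
  | 0 => (LinearMap.mulLeft ℤ a : A →ₗ[ℤ] A)
  | n + 1 => LinearMap.rTensor (Tpow A n : Type u) (LinearMap.mulLeft ℤ a)

/-- Multiplication by `a : A` on the rightmost tensor factor. -/
noncomputable def rmulT (a : A) : ∀ n, (Tpow A n : Type u) →ₗ[ℤ] (Tpow A n : Type u)
  | 0 => (LinearMap.mulRight ℤ a : A →ₗ[ℤ] A)
  | n + 1 => LinearMap.lTensor A (rmulT a n)

private theorem lmulT_succ_apply (a : A) (n : ℕ) (x : A ⊗[ℤ] (Tpow A n : Type u)) :
    lmulT A a (n+1) x = LinearMap.rTensor (Tpow A n : Type u) (LinearMap.mulLeft ℤ a) x := rfl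

private theorem rmulT_succ_apply (a : A) (n : ℕ) (x : A ⊗[ℤ] (Tpow A n : Type u)) :
    rmulT A a (n+1) x = LinearMap.lTensor A (rmulT A a n) x := rfl

private theorem auxcomm (M : Type u) [AddCommGroup M] [Module ℤ M] (a : A) (g : M →ₗ[ℤ] M)
    (x : A ⊗[ℤ] M) :
    (LinearMap.rTensor M (LinearMap.mulLeft ℤ a)) ((LinearMap.lTensor A g) x) =
    (LinearMap.lTensor A g) ((LinearMap.rTensor M (LinearMap.mulLeft ℤ a)) x) := by
  induction x using TensorProduct.induction_on with
  | zero => simp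
  | tmul c t => simp
  | add y z hy hz => simp only [map_add, hy, hz]

theorem lmulT_rmulT_comm (a b : A) : ∀ (n : ℕ) (x : (Tpow A n : Type u)),
    lmulT A a n (rmulT A b n x) = rmulT A b n (lmulT A a n x)
  | 0, x => (mul_assoc a x b).symm
  | n + 1, x => by
    show (lmulT A a (n+1)) ((rmulT A b (n+1)) x) = (rmulT A b (n+1)) ((lmulT A a (n+1)) x)
    rw [lmulT, rmulT]
    exact auxcomm A (Tpow A n : Type u) a (rmulT A b n) x

private theorem aux1 (M : Type u) [AddCommGroup M] [Module ℤ M] (a c d : A) (t s : M) :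
    LinearMap.rTensor M (LinearMap.mulLeft ℤ a) (c ⊗ₜ[ℤ] t - d ⊗ₜ[ℤ] s) =
      (a * c) ⊗ₜ[ℤ] t - (a * d) ⊗ₜ[ℤ] s := by simp

private theorem aux2 (M : Type u) [AddCommGroup M] [Module ℤ M] (g : M →ₗ[ℤ] M) (c d : A)
    (t s : M) :
    LinearMap.lTensor A g (c ⊗ₜ[ℤ] t - d ⊗ₜ[ℤ] s) = c ⊗ₜ[ℤ] (g t) - d ⊗ₜ[ℤ] (g s) := by simp

private theorem aux3 (M : Type u) [AddCommGroup M] [Module ℤ M] (a c : A) (t : M) :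
    LinearMap.rTensor M (LinearMap.mulLeft ℤ a) (c ⊗ₜ[ℤ] t) = (a * c) ⊗ₜ[ℤ] t := by simp

private theorem aux4 (M : Type u) [AddCommGroup M] [Module ℤ M] (g : M →ₗ[ℤ] M) (c : A) (t : M) :
    LinearMap.lTensor A g (c ⊗ₜ[ℤ] t) = c ⊗ₜ[ℤ] (g t) := by simp


variable {A}

/-- The `B`-balancing relations inside `Tpow A n`. -/
noncomputable def rel (B : Subring A) : ∀ n, Submodule ℤ (Tpow A n : Type u)
  | 0 => ⊥
  | n + 1 =>
      Submodule.span ℤ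
        {x : (Tpow A (n+1) : Type u) |
          (∃ (a : A) (b : B) (t : (Tpow A n : Type u)),
            x = ((a * (b : A)) ⊗ₜ[ℤ] t : A ⊗[ℤ] (Tpow A n : Type u)) -
                 a ⊗ₜ[ℤ] (lmulT A (b : A) n t)) ∨
          (∃ (a : A) (r : (Tpow A n : Type u)), r ∈ rel B n ∧
            x = (a ⊗ₜ[ℤ] r : A ⊗[ℤ] (Tpow A n : Type u)))}

theorem rel_succ (B : Subring A) (n : ℕ) :
    rel B (n+1) =
      Submodule.span ℤ
        {x : (Tpow A (n+1) : Type u) |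
          (∃ (a : A) (b : B) (t : (Tpow A n : Type u)),
            x = ((a * (b : A)) ⊗ₜ[ℤ] t : A ⊗[ℤ] (Tpow A n : Type u)) -
                 a ⊗ₜ[ℤ] (lmulT A (b : A) n t)) ∨
          (∃ (a : A) (r : (Tpow A n : Type u)), r ∈ rel B n ∧
            x = (a ⊗ₜ[ℤ] r : A ⊗[ℤ] (Tpow A n : Type u)))} := rfl

theorem rel_le_comap_lmulT (B : Subring A) (a : A) :
    ∀ n, rel B n ≤ (rel B n).comap (lmulT A a n)
  | 0 => bot_le
  | n + 1 => by
    rw [rel_succ, Submodule.span_le]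
    rintro x (⟨a', b, t, rfl⟩ | ⟨a', r, hr, rfl⟩) <;>
      apply Submodule.mem_comap.mpr <;> rw [lmulT_succ_apply]
    · rw [map_sub, LinearMap.rTensor_tmul, LinearMap.rTensor_tmul, LinearMap.mulLeft_apply,
        LinearMap.mulLeft_apply]
      refine Submodule.subset_span (Or.inl ⟨a * a', b, t, ?_⟩)
      rw [mul_assoc]
    · rw [LinearMap.rTensor_tmul, LinearMap.mulLeft_apply]
      exact Submodule.subset_span (Or.inr ⟨a * a', r, hr, rfl⟩)

theorem rel_le_comap_rmulT (B : Subring A) (a : A) :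
    ∀ n, rel B n ≤ (rel B n).comap (rmulT A a n)
  | 0 => bot_le
  | n + 1 => by
    rw [rel_succ, Submodule.span_le]
    rintro x (⟨a', b, t, rfl⟩ | ⟨a', r, hr, rfl⟩) <;>
      apply Submodule.mem_comap.mpr <;> rw [rmulT_succ_apply]
    · rw [map_sub, LinearMap.lTensor_tmul, LinearMap.lTensor_tmul, ← lmulT_rmulT_comm]
      exact Submodule.subset_span (Or.inl ⟨a', b, rmulT A a n t, rfl⟩)
    · rw [LinearMap.lTensor_tmul]
      exact Submodule.subset_span
        (Or.inr ⟨a', rmulT A a n r, rel_le_comap_rmulT B a n hr, rfl⟩)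

/-- `CC B n` is `C_n(A,B) = A ⊗_B ⋯ ⊗_B A` (`n` factors of `A`), with `CC B 0 = B`. -/
noncomputable def CC (B : Subring A) : ℕ → ModuleCat.{u} ℤ
  | 0 => ModuleCat.of ℤ B
  | n + 1 => ModuleCat.of ℤ ((Tpow A n : Type u) ⧸ rel B n)

/-- The left `A`-action on `C_{n+1}(A,B)`. -/
noncomputable def lA (B : Subring A) (a : A) (n : ℕ) :
    (CC B (n+1) : Type u) →ₗ[ℤ] (CC B (n+1) : Type u) :=
  ModuleCat.Hom.hom (ModuleCat.ofHom (Submodule.mapQ _ _ (lmulT A a n) (rel_le_comap_lmulT B a n)))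

/-- The right `A`-action on `C_{n+1}(A,B)`. -/
noncomputable def rA (B : Subring A) (a : A) (n : ℕ) :
    (CC B (n+1) : Type u) →ₗ[ℤ] (CC B (n+1) : Type u) :=
  ModuleCat.Hom.hom (ModuleCat.ofHom (Submodule.mapQ _ _ (rmulT A a n) (rel_le_comap_rmulT B a n)))

/-- The left `B`-action on `C_n(A,B)`. -/
noncomputable def lB (B : Subring A) (b : B) : ∀ n, (CC B n : Type u) →ₗ[ℤ] (CC B n : Type u)
  | 0 => (LinearMap.mulLeft ℤ b : B →ₗ[ℤ] B)
  | n + 1 => lA B (b : A) n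

/-- The right `B`-action on `C_n(A,B)`. -/
noncomputable def rB (B : Subring A) (b : B) : ∀ n, (CC B n : Type u) →ₗ[ℤ] (CC B n : Type u)
  | 0 => (LinearMap.mulRight ℤ b : B →ₗ[ℤ] B)
  | n + 1 => rA B (b : A) n

/-- `f` is a morphism of `B`-`B`-bimodules `C_m(A,B) → C_n(A,B)`. -/
def IsBBHom (B : Subring A) {m n : ℕ} (f : (CC B m : Type u) →ₗ[ℤ] (CC B n : Type u)) : Prop :=
  ∀ b : B, (∀ x, f (lB B b m x) = lB B b n (f x)) ∧ (∀ x, f (rB B b m x) = rB B b n (f x))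

/-- `f` is a morphism of `A`-`B`-bimodules `C_{m+1}(A,B) → C_{n+1}(A,B)`. -/
def IsABHom (B : Subring A) {m n : ℕ}
    (f : (CC B (m+1) : Type u) →ₗ[ℤ] (CC B (n+1) : Type u)) : Prop :=
  (∀ (a : A) x, f (lA B a m x) = lA B a n (f x)) ∧
  (∀ (b : B) x, f (rB B b (m+1) x) = rB B b (n+1) (f x))

/-- `f` is a morphism of `B`-`A`-bimodules `C_{m+1}(A,B) → C_{n+1}(A,B)`. -/
def IsBAHom (B : Subring A) {m n : ℕ}
    (f : (CC B (m+1) : Type u) →ₗ[ℤ] (CC B (n+1) : Type u)) : Prop :=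
  (∀ (b : B) x, f (lB B b (m+1) x) = lB B b (n+1) (f x)) ∧
  (∀ (a : A) x, f (rA B a m x) = rA B a n (f x))

/-- `C_m(A,B)` divides a multiple of `C_n(A,B)` as `B`-`B`-bimodules. -/
def DividesBB (B : Subring A) (m n : ℕ) : Prop :=
  ∃ (r : ℕ) (f : Fin r → ((CC B m : Type u) →ₗ[ℤ] (CC B n : Type u)))
    (g : Fin r → ((CC B n : Type u) →ₗ[ℤ] (CC B m : Type u))),
    (∀ i, IsBBHom B (f i)) ∧ (∀ i, IsBBHom B (g i)) ∧
      ∑ i, (g i).comp (f i) = LinearMap.id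

/-- `C_{m+1}(A,B)` divides a multiple of `C_{n+1}(A,B)` as `A`-`B`-bimodules. -/
def DividesAB (B : Subring A) (m n : ℕ) : Prop :=
  ∃ (r : ℕ) (f : Fin r → ((CC B (m+1) : Type u) →ₗ[ℤ] (CC B (n+1) : Type u)))
    (g : Fin r → ((CC B (n+1) : Type u) →ₗ[ℤ] (CC B (m+1) : Type u))),
    (∀ i, IsABHom B (f i)) ∧ (∀ i, IsABHom B (g i)) ∧
      ∑ i, (g i).comp (f i) = LinearMap.id

/-- `C_{m+1}(A,B)` divides a multiple of `C_{n+1}(A,B)` as `B`-`A`-bimodules. -/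
def DividesBA (B : Subring A) (m n : ℕ) : Prop :=
  ∃ (r : ℕ) (f : Fin r → ((CC B (m+1) : Type u) →ₗ[ℤ] (CC B (n+1) : Type u)))
    (g : Fin r → ((CC B (n+1) : Type u) →ₗ[ℤ] (CC B (m+1) : Type u))),
    (∀ i, IsBAHom B (f i)) ∧ (∀ i, IsBAHom B (g i)) ∧
      ∑ i, (g i).comp (f i) = LinearMap.id

/-- H-equivalence of `C_m` and `C_n` as `B`-`B`-bimodules. -/
def HequivBB (B : Subring A) (m n : ℕ) : Prop := DividesBB B m n ∧ DividesBB B n m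

/-- H-equivalence of `C_{m+1}` and `C_{n+1}` as `A`-`B`-bimodules. -/
def HequivAB (B : Subring A) (m n : ℕ) : Prop := DividesAB B m n ∧ DividesAB B n m

/-- H-equivalence of `C_{m+1}` and `C_{n+1}` as `B`-`A`-bimodules. -/
def HequivBA (B : Subring A) (m n : ℕ) : Prop := DividesBA B m n ∧ DividesBA B n m

/-- The extension `B ⊆ A` has depth `d`: depth `2n+1` (`n ≥ 0`) means
`C_{n+1} ∼ C_n` as `B`-`B`-bimodules, and right (resp. left) depth `2n` (`n ≥ 1`)
means `C_{n+1} ∼ C_n` as `A`-`B`- (resp. `B`-`A`-) bimodules. -/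
def HasDepth (B : Subring A) (d : ℕ) : Prop :=
  (∃ n : ℕ, d = 2 * n + 1 ∧ HequivBB B (n+1) n) ∨
  (∃ n : ℕ, d = 2 * (n+1) ∧ (HequivAB B (n+1) n ∨ HequivBA B (n+1) n))

/-- The minimum depth `d(B,A) ∈ ℕ∞` of the subring extension `B ⊆ A`. -/
noncomputable def depth (B : Subring A) : ℕ∞ :=
  sInf {d : ℕ∞ | ∃ m : ℕ, HasDepth B m ∧ d = (m : ℕ∞)}

/-!
Let `π : A → A'` be a surjective ring map whose kernel `I` lies in `B`. Then `π` induces a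
surjection `C_n(A,B) → C_n(A', π B)` whose kernel is spanned by the elements `j · x` with
`j ∈ I`: on the level of tensor powers, `a ⊗ j t` and `a j ⊗ t` agree modulo the `B`-balancing
relations precisely because `j ∈ B`. A `B`-linear map commutes with multiplication by `j ∈ I`,
so it maps this kernel into the next one and descends along `π`; splittings `∑ gᵢ fᵢ = id`
descend with it. Hence every depth condition satisfied by `B ⊆ A` is satisfied by
`π B ⊆ A'`, and `d(π B, A') ≤ d(B, A)`. Apply this to `A → A/J₀` and to `A/J₀ → A/J₁`.
-/

theorem LinearMap.exists_descent_of_ker_le {R M M' N N' : Type*} [Ring R] [AddCommGroup M]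
    [AddCommGroup M'] [AddCommGroup N] [AddCommGroup N'] [Module R M] [Module R M'] [Module R N]
    [Module R N'] {p : M →ₗ[R] M'} (hp : Function.Surjective p) {q : N →ₗ[R] N'}
    {f : M →ₗ[R] N} (h : LinearMap.ker p ≤ LinearMap.ker (q ∘ₗ f)) :
    ∃ f' : M' →ₗ[R] N', ∀ x, f' (p x) = q (f x) :=
  ⟨(LinearMap.ker p).liftQ (q ∘ₗ f) h ∘ₗ (p.quotKerEquivOfSurjective hp).symm.toLinearMap,
    fun x => by simp [LinearMap.quotKerEquivOfSurjective_symm_apply]⟩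

theorem Function.Semiconj.of_surjective_of_comp_eq {X X' Y Y' : Type*} {p : X → X'}
    {q : Y → Y'} (hp : Function.Surjective p) {f : X → Y} {f' : X' → Y'}
    (hf' : ∀ x, f' (p x) = q (f x)) ⦃φ : X → X⦄ ⦃φ' : X' → X'⦄ ⦃ψ : Y → Y⦄ ⦃ψ' : Y' → Y'⦄ :
    Function.Semiconj p φ φ' → Function.Semiconj q ψ ψ' → Function.Semiconj f φ ψ →
      Function.Semiconj f' φ' ψ' :=
  fun hφ hψ h => hp.forall.2 fun x => by rw [← hφ, hf', hf', h, hψ]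

theorem LinearMap.sum_comp_eq_id_of_surjective {R M M' N N' ι : Type*} [Ring R]
    [AddCommGroup M] [AddCommGroup M'] [AddCommGroup N] [AddCommGroup N'] [Module R M]
    [Module R M'] [Module R N] [Module R N'] [Fintype ι] {p : M →ₗ[R] M'}
    (hp : Function.Surjective p) {q : N →ₗ[R] N'} {f : ι → M →ₗ[R] N} {g : ι → N →ₗ[R] M}
    {f' : ι → M' →ₗ[R] N'} {g' : ι → N' →ₗ[R] M'}
    (hf' : ∀ i x, f' i (p x) = q (f i x)) (hg' : ∀ i y, g' i (q y) = p (g i y))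
    (h : ∑ i, g i ∘ₗ f i = LinearMap.id) : ∑ i, g' i ∘ₗ f' i = LinearMap.id := by
  ext y
  obtain ⟨x, rfl⟩ := hp y
  have hx := LinearMap.congr_fun h x
  simp only [LinearMap.sum_apply, LinearMap.comp_apply, LinearMap.id_apply] at hx ⊢
  simp only [hf', hg', ← map_sum, hx]

theorem lmulT_zero : ∀ n, lmulT A 0 n = 0
  | 0 => LinearMap.ext fun x => zero_mul (show A from x)
  | n + 1 => by
    show LinearMap.rTensor _ (LinearMap.mulLeft ℤ (0 : A)) = 0
    rw [LinearMap.mulLeft_zero_eq_zero, LinearMap.rTensor_zero]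

theorem lB_zero (C : Subring A) : ∀ n x, lB C 0 n x = 0
  | 0, x => zero_mul (show C from x)
  | n + 1, x => by
    obtain ⟨x, rfl⟩ := Submodule.Quotient.mk_surjective _ x
    show Submodule.Quotient.mk (lmulT A ((0 : C) : A) n x) = 0
    rw [ZeroMemClass.coe_zero, lmulT_zero, LinearMap.zero_apply, Submodule.Quotient.mk_zero]

-- `TensorProduct.mk` typed with codomain `Tpow A (n+1)`, so that submodules of `Tpow A (n+1)`
-- can be pulled back along it
noncomputable def tmulLeft (a : A) (n : ℕ) :
    (Tpow A n : Type u) →ₗ[ℤ] (Tpow A (n+1) : Type u) :=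
  TensorProduct.mk ℤ A (Tpow A n : Type u) a

section Descent

variable {A' : Type u} [Ring A'] (π : A →+* A') (B : Subring A)

noncomputable def tpowMap : ∀ n, (Tpow A n : Type u) →ₗ[ℤ] (Tpow A' n : Type u)
  | 0 => π.toAddMonoidHom.toIntLinearMap
  | n + 1 => TensorProduct.map π.toAddMonoidHom.toIntLinearMap (tpowMap n)

theorem tpowMap_succ_apply (n : ℕ) (x : A ⊗[ℤ] (Tpow A n : Type u)) :
    tpowMap π (n+1) x = TensorProduct.map π.toAddMonoidHom.toIntLinearMap (tpowMap π n) x :=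
  rfl

theorem tpowMap_surjective (hπ : Function.Surjective π) :
    ∀ n, Function.Surjective (tpowMap π n)
  | 0 => hπ
  | n + 1 => TensorProduct.map_surjective hπ (tpowMap_surjective hπ n)

theorem tpowMap_comp_lmulT (a : A) :
    ∀ n, tpowMap π n ∘ₗ lmulT A a n = lmulT A' (π a) n ∘ₗ tpowMap π n
  | 0 => LinearMap.ext (π.map_mul a)
  | n + 1 => by
    show TensorProduct.map _ _ ∘ₗ LinearMap.rTensor _ _ =
      LinearMap.rTensor _ _ ∘ₗ TensorProduct.map _ _
    rw [LinearMap.map_comp_rTensor, LinearMap.rTensor_comp_map]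
    exact congrArg₂ _ (LinearMap.ext (π.map_mul a)) rfl

theorem tpowMap_comp_rmulT (a : A) :
    ∀ n, tpowMap π n ∘ₗ rmulT A a n = rmulT A' (π a) n ∘ₗ tpowMap π n
  | 0 => LinearMap.ext fun x => π.map_mul x a
  | n + 1 => by
    show TensorProduct.map _ _ ∘ₗ LinearMap.lTensor _ _ =
      LinearMap.lTensor _ _ ∘ₗ TensorProduct.map _ _
    rw [LinearMap.map_comp_lTensor, LinearMap.lTensor_comp_map, tpowMap_comp_rmulT a n]

theorem tpowMap_lmulT (a : A) (n : ℕ) (x : (Tpow A n : Type u)) :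
    tpowMap π n (lmulT A a n x) = lmulT A' (π a) n (tpowMap π n x) :=
  LinearMap.congr_fun (tpowMap_comp_lmulT π a n) x

theorem rel_le_comap_tpowMap : ∀ n, rel B n ≤ (rel (B.map π) n).comap (tpowMap π n)
  | 0 => bot_le
  | n + 1 => by
    rw [rel_succ, Submodule.span_le]
    rintro x (⟨a, b, t, rfl⟩ | ⟨a, r, hr, rfl⟩) <;>
      apply Submodule.mem_comap.mpr <;> rw [tpowMap_succ_apply]
    · rw [map_sub, TensorProduct.map_tmul, TensorProduct.map_tmul]
      refine Submodule.subset_span (Or.inl ⟨π a, ⟨π b, Subring.mem_map.2 ⟨b, b.2, rfl⟩⟩,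
        tpowMap π n t, ?_⟩)
      rw [tpowMap_lmulT]
      exact congrArg₂ _ (congrArg₂ _ (map_mul π a b) rfl) rfl
    · exact Submodule.subset_span
        (Or.inr ⟨π a, tpowMap π n r, rel_le_comap_tpowMap n hr, rfl⟩)

theorem rel_map_le_map_tpowMap (hπ : Function.Surjective π) :
    ∀ n, rel (B.map π) n ≤ (rel B n).map (tpowMap π n)
  | 0 => bot_le
  | n + 1 => by
    rw [rel_succ, Submodule.span_le]
    rintro x (⟨a', ⟨_, b, hb, rfl⟩, t', rfl⟩ | ⟨a', r', hr', rfl⟩)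
    · obtain ⟨a, rfl⟩ := hπ a'
      obtain ⟨t, rfl⟩ := tpowMap_surjective π hπ n t'
      refine ⟨(a * b) ⊗ₜ[ℤ] t - a ⊗ₜ[ℤ] lmulT A b n t,
        Submodule.subset_span (Or.inl ⟨a, ⟨b, hb⟩, t, rfl⟩), ?_⟩
      rw [tpowMap_succ_apply, map_sub, TensorProduct.map_tmul, TensorProduct.map_tmul,
        tpowMap_lmulT]
      exact congrArg₂ _ (congrArg₂ _ (map_mul π a b) rfl) rfl
    · obtain ⟨a, rfl⟩ := hπ a'
      obtain ⟨r, hr, rfl⟩ := rel_map_le_map_tpowMap hπ n hr'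
      exact ⟨a ⊗ₜ[ℤ] r, Submodule.subset_span (Or.inr ⟨a, r, hr, rfl⟩), rfl⟩

noncomputable def kerLmul (n : ℕ) : Submodule ℤ (Tpow A n : Type u) :=
  ⨆ j : RingHom.ker π, LinearMap.range (lmulT A j n)

theorem tmulLeft_mem_kerLmul {j : A} (hj : π j = 0) (n : ℕ) (t : (Tpow A n : Type u)) :
    tmulLeft j n t ∈ kerLmul π (n+1) :=
  Submodule.mem_iSup_of_mem ⟨j, hj⟩ ⟨tmulLeft 1 n t, by
    show (j * 1) ⊗ₜ[ℤ] t = j ⊗ₜ[ℤ] t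
    rw [mul_one]⟩

theorem rel_sup_kerLmul_le_comap_tmulLeft (hB : ∀ x, π x = 0 → x ∈ B) (a : A) (n : ℕ) :
    rel B n ⊔ kerLmul π n ≤ (rel B (n+1) ⊔ kerLmul π (n+1)).comap (tmulLeft a n) := by
  refine sup_le (fun r hr => Submodule.mem_sup_left ?_) (iSup_le fun ⟨j, hj⟩ => ?_)
  · exact Submodule.subset_span (Or.inr ⟨a, r, hr, rfl⟩)
  · rintro _ ⟨t, rfl⟩
    have hbal : tmulLeft (a * j) n t - tmulLeft a n (lmulT A j n t) ∈ rel B (n+1) :=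
      Submodule.subset_span (Or.inl ⟨a, ⟨j, hB j hj⟩, t, rfl⟩)
    have hker := tmulLeft_mem_kerLmul π (show π (a * j) = 0 by rw [map_mul, hj, mul_zero]) n t
    have key := sub_mem (Submodule.mem_sup_right hker) (Submodule.mem_sup_left hbal)
    rwa [sub_sub_cancel] at key

theorem ker_tpowMap_le (hπ : Function.Surjective π) (hB : ∀ x, π x = 0 → x ∈ B) :
    ∀ n, LinearMap.ker (tpowMap π n) ≤ rel B n ⊔ kerLmul π n
  | 0 => fun x hx => Submodule.mem_sup_right
      (Submodule.mem_iSup_of_mem ⟨x, hx⟩ ⟨(1 : A), mul_one (show A from x)⟩)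
  | n + 1 => by
    intro x hx
    change A ⊗[ℤ] (Tpow A n : Type u) at x
    -- the `ℤ`-module structure of the kernel as a submodule, not `AddCommGroup.toIntModule`
    let _ := (LinearMap.ker (tpowMap π n)).module
    have hπ' : Function.Surjective π.toAddMonoidHom.toIntLinearMap := hπ
    have hx' : x ∈
        LinearMap.range (LinearMap.lTensor A (LinearMap.ker (tpowMap π n)).subtype) ⊔
        LinearMap.range (LinearMap.rTensor (Tpow A n : Type u)
          (LinearMap.ker π.toAddMonoidHom.toIntLinearMap).subtype) := by
      rw [← TensorProduct.map_ker (LinearMap.exact_subtype_ker_map _) hπ'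
        (LinearMap.exact_subtype_ker_map _) (tpowMap_surjective π hπ n)]
      exact hx
    obtain ⟨u, hu, v, hv, rfl⟩ := Submodule.mem_sup.1 hx'
    clear hx hx'
    refine add_mem ?_ ?_
    · obtain ⟨y, rfl⟩ := hu
      induction y using TensorProduct.induction_on with
      | zero => rw [map_zero]; exact zero_mem _
      | tmul a r =>
        exact rel_sup_kerLmul_le_comap_tmulLeft π B hB a n (ker_tpowMap_le hπ hB n r.2)
      | add y z hy hz => rw [map_add]; exact add_mem hy hz
    · obtain ⟨z, rfl⟩ := hv
      induction z using TensorProduct.induction_on with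
      | zero => rw [map_zero]; exact zero_mem _
      | tmul j t => exact Submodule.mem_sup_right (tmulLeft_mem_kerLmul π j.2 n t)
      | add y z hy hz => rw [map_add]; exact add_mem hy hz

noncomputable def restrictMap : B →+* B.map π :=
  π.restrict B (B.map π) fun x hx => ⟨x, hx, rfl⟩

theorem restrictMap_surjective : Function.Surjective (restrictMap π B) := by
  rintro ⟨_, b, hb, rfl⟩
  exact ⟨⟨b, hb⟩, rfl⟩

noncomputable def ccMap : ∀ n, (CC B n : Type u) →ₗ[ℤ] (CC (B.map π) n : Type u)
  | 0 => (restrictMap π B).toAddMonoidHom.toIntLinearMap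
  | n + 1 => ModuleCat.Hom.hom
      (ModuleCat.ofHom (Submodule.mapQ _ _ (tpowMap π n) (rel_le_comap_tpowMap π B n)))

theorem ccMap_surjective (hπ : Function.Surjective π) : ∀ n, Function.Surjective (ccMap π B n)
  | 0 => restrictMap_surjective π B
  | n + 1 => fun y => by
    obtain ⟨y, rfl⟩ := Submodule.Quotient.mk_surjective _ y
    obtain ⟨x, rfl⟩ := tpowMap_surjective π hπ n y
    exact ⟨Submodule.Quotient.mk x, rfl⟩

theorem ccMap_lA (a : A) (n : ℕ) :
    Function.Semiconj (ccMap π B (n+1)) (lA B a n) (lA (B.map π) (π a) n) := by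
  intro x
  obtain ⟨x, rfl⟩ := Submodule.Quotient.mk_surjective _ x
  exact congrArg Submodule.Quotient.mk (LinearMap.congr_fun (tpowMap_comp_lmulT π a n) x)

theorem ccMap_rA (a : A) (n : ℕ) :
    Function.Semiconj (ccMap π B (n+1)) (rA B a n) (rA (B.map π) (π a) n) := by
  intro x
  obtain ⟨x, rfl⟩ := Submodule.Quotient.mk_surjective _ x
  exact congrArg Submodule.Quotient.mk (LinearMap.congr_fun (tpowMap_comp_rmulT π a n) x)

theorem ccMap_lB (b : B) :
    ∀ n, Function.Semiconj (ccMap π B n) (lB B b n) (lB (B.map π) (restrictMap π B b) n)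
  | 0 => fun (x : B) => map_mul (restrictMap π B) b x
  | n + 1 => ccMap_lA π B b n

theorem ccMap_rB (b : B) :
    ∀ n, Function.Semiconj (ccMap π B n) (rB B b n) (rB (B.map π) (restrictMap π B b) n)
  | 0 => fun (x : B) => map_mul (restrictMap π B) x b
  | n + 1 => ccMap_rA π B b n

theorem ker_ccMap_le (hπ : Function.Surjective π) (hB : ∀ x, π x = 0 → x ∈ B) :
    ∀ n, LinearMap.ker (ccMap π B n) ≤
      ⨆ j : RingHom.ker (restrictMap π B), LinearMap.range (lB B j n)
  | 0 => fun x hx => Submodule.mem_iSup_of_mem ⟨x, hx⟩ ⟨(1 : B), mul_one (show B from x)⟩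
  | n + 1 => by
    intro x hx
    obtain ⟨x, rfl⟩ := Submodule.Quotient.mk_surjective _ x
    obtain ⟨r, hr, hrx⟩ :=
      rel_map_le_map_tpowMap π B hπ n ((Submodule.Quotient.mk_eq_zero _).1 hx)
    have hxr : x - r ∈ rel B n ⊔ kerLmul π n :=
      ker_tpowMap_le π B hπ hB n (by rw [LinearMap.mem_ker, map_sub, hrx, sub_self])
    obtain ⟨u, hu, v, hv, huv⟩ := Submodule.mem_sup.1 hxr
    have hxv : (Submodule.Quotient.mk x : (CC B (n+1) : Type u)) = Submodule.Quotient.mk v := by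
      have hx : x - v = u + r := by rw [sub_eq_iff_eq_add.1 huv.symm]; abel
      rw [Submodule.Quotient.eq, hx]
      exact add_mem hu hr
    rw [hxv]
    refine Submodule.iSup_induction _
      (motive := fun v => (Submodule.Quotient.mk v : (CC B (n+1) : Type u)) ∈ _)
      hv ?_ (zero_mem _) fun y z => add_mem
    rintro j _ ⟨t, rfl⟩
    exact Submodule.mem_iSup_of_mem (M := (CC B (n+1) : Type u))
      ⟨⟨j, hB j j.2⟩, Subtype.ext j.2⟩ ⟨Submodule.Quotient.mk t, rfl⟩

theorem ker_ccMap_le_ker_comp (hπ : Function.Surjective π) (hB : ∀ x, π x = 0 → x ∈ B)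
    {m n : ℕ} {f : (CC B m : Type u) →ₗ[ℤ] (CC B n : Type u)}
    (hf : ∀ b : B, Function.Semiconj f (lB B b m) (lB B b n)) :
    LinearMap.ker (ccMap π B m) ≤ LinearMap.ker (ccMap π B n ∘ₗ f) := by
  refine (ker_ccMap_le π B hπ hB m).trans (iSup_le fun j => ?_)
  rintro _ ⟨y, rfl⟩
  rw [LinearMap.mem_ker, LinearMap.comp_apply, hf, ccMap_lB, RingHom.mem_ker.1 j.2, lB_zero]

theorem IsBBHom.exists_descent (hπ : Function.Surjective π) (hB : ∀ x, π x = 0 → x ∈ B)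
    {m n : ℕ} {f : (CC B m : Type u) →ₗ[ℤ] (CC B n : Type u)} (hf : IsBBHom B f) :
    ∃ f' : (CC (B.map π) m : Type u) →ₗ[ℤ] (CC (B.map π) n : Type u),
      IsBBHom (B.map π) f' ∧ ∀ x, f' (ccMap π B m x) = ccMap π B n (f x) := by
  obtain ⟨f', hf'⟩ := LinearMap.exists_descent_of_ker_le (ccMap_surjective π B hπ m)
    (ker_ccMap_le_ker_comp π B hπ hB fun b => (hf b).1)
  have descend := Function.Semiconj.of_surjective_of_comp_eq (ccMap_surjective π B hπ m) hf'
  refine ⟨f', fun b' => ?_, hf'⟩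
  obtain ⟨b, rfl⟩ := restrictMap_surjective π B b'
  exact ⟨descend (ccMap_lB π B b m) (ccMap_lB π B b n) (hf b).1,
    descend (ccMap_rB π B b m) (ccMap_rB π B b n) (hf b).2⟩

theorem IsABHom.exists_descent (hπ : Function.Surjective π) (hB : ∀ x, π x = 0 → x ∈ B)
    {m n : ℕ} {f : (CC B (m+1) : Type u) →ₗ[ℤ] (CC B (n+1) : Type u)} (hf : IsABHom B f) :
    ∃ f' : (CC (B.map π) (m+1) : Type u) →ₗ[ℤ] (CC (B.map π) (n+1) : Type u),
      IsABHom (B.map π) f' ∧ ∀ x, f' (ccMap π B (m+1) x) = ccMap π B (n+1) (f x) := by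
  obtain ⟨f', hf'⟩ := LinearMap.exists_descent_of_ker_le (ccMap_surjective π B hπ (m+1))
    (ker_ccMap_le_ker_comp π B hπ hB fun b => hf.1 b)
  have descend := Function.Semiconj.of_surjective_of_comp_eq (ccMap_surjective π B hπ (m+1)) hf'
  refine ⟨f', ⟨fun a' => ?_, fun b' => ?_⟩, hf'⟩
  · obtain ⟨a, rfl⟩ := hπ a'
    exact descend (ccMap_lA π B a m) (ccMap_lA π B a n) (hf.1 a)
  · obtain ⟨b, rfl⟩ := restrictMap_surjective π B b'
    exact descend (ccMap_rB π B b (m+1)) (ccMap_rB π B b (n+1)) (hf.2 b)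

theorem IsBAHom.exists_descent (hπ : Function.Surjective π) (hB : ∀ x, π x = 0 → x ∈ B)
    {m n : ℕ} {f : (CC B (m+1) : Type u) →ₗ[ℤ] (CC B (n+1) : Type u)} (hf : IsBAHom B f) :
    ∃ f' : (CC (B.map π) (m+1) : Type u) →ₗ[ℤ] (CC (B.map π) (n+1) : Type u),
      IsBAHom (B.map π) f' ∧ ∀ x, f' (ccMap π B (m+1) x) = ccMap π B (n+1) (f x) := by
  obtain ⟨f', hf'⟩ := LinearMap.exists_descent_of_ker_le (ccMap_surjective π B hπ (m+1))
    (ker_ccMap_le_ker_comp π B hπ hB hf.1)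
  have descend := Function.Semiconj.of_surjective_of_comp_eq (ccMap_surjective π B hπ (m+1)) hf'
  refine ⟨f', ⟨fun b' => ?_, fun a' => ?_⟩, hf'⟩
  · obtain ⟨b, rfl⟩ := restrictMap_surjective π B b'
    exact descend (ccMap_lB π B b (m+1)) (ccMap_lB π B b (n+1)) (hf.1 b)
  · obtain ⟨a, rfl⟩ := hπ a'
    exact descend (ccMap_rA π B a m) (ccMap_rA π B a n) (hf.2 a)

theorem DividesBB.map (hπ : Function.Surjective π) (hB : ∀ x, π x = 0 → x ∈ B) {m n : ℕ}
    (h : DividesBB B m n) : DividesBB (B.map π) m n := by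
  obtain ⟨r, f, g, hf, hg, hsum⟩ := h
  choose f' hf' hff' using fun i => (hf i).exists_descent π B hπ hB
  choose g' hg' hgg' using fun i => (hg i).exists_descent π B hπ hB
  exact ⟨r, f', g', hf', hg',
    LinearMap.sum_comp_eq_id_of_surjective (ccMap_surjective π B hπ m) hff' hgg' hsum⟩

theorem DividesAB.map (hπ : Function.Surjective π) (hB : ∀ x, π x = 0 → x ∈ B) {m n : ℕ}
    (h : DividesAB B m n) : DividesAB (B.map π) m n := by
  obtain ⟨r, f, g, hf, hg, hsum⟩ := h
  choose f' hf' hff' using fun i => (hf i).exists_descent π B hπ hB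
  choose g' hg' hgg' using fun i => (hg i).exists_descent π B hπ hB
  exact ⟨r, f', g', hf', hg',
    LinearMap.sum_comp_eq_id_of_surjective (ccMap_surjective π B hπ (m+1)) hff' hgg' hsum⟩

theorem DividesBA.map (hπ : Function.Surjective π) (hB : ∀ x, π x = 0 → x ∈ B) {m n : ℕ}
    (h : DividesBA B m n) : DividesBA (B.map π) m n := by
  obtain ⟨r, f, g, hf, hg, hsum⟩ := h
  choose f' hf' hff' using fun i => (hf i).exists_descent π B hπ hB
  choose g' hg' hgg' using fun i => (hg i).exists_descent π B hπ hB
  exact ⟨r, f', g', hf', hg',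
    LinearMap.sum_comp_eq_id_of_surjective (ccMap_surjective π B hπ (m+1)) hff' hgg' hsum⟩

theorem HasDepth.map (hπ : Function.Surjective π) (hB : ∀ x, π x = 0 → x ∈ B) {d : ℕ}
    (h : HasDepth B d) : HasDepth (B.map π) d := by
  rcases h with ⟨n, rfl, h₁, h₂⟩ | ⟨n, rfl, ⟨h₁, h₂⟩ | ⟨h₁, h₂⟩⟩
  · exact Or.inl ⟨n, rfl, h₁.map π B hπ hB, h₂.map π B hπ hB⟩
  · exact Or.inr ⟨n, rfl, Or.inl ⟨h₁.map π B hπ hB, h₂.map π B hπ hB⟩⟩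
  · exact Or.inr ⟨n, rfl, Or.inr ⟨h₁.map π B hπ hB, h₂.map π B hπ hB⟩⟩

theorem depth_map_le (hπ : Function.Surjective π) (hB : ∀ x, π x = 0 → x ∈ B) :
    depth (B.map π) ≤ depth B :=
  sInf_le_sInf fun _ ⟨m, hm, hd⟩ => ⟨m, hm.map π B hπ hB, hd⟩

theorem depth_map_map_le {A'' : Type u} [Ring A''] (hπ : Function.Surjective π) {ψ : A' →+* A''}
    (hψ : Function.Surjective ψ) (hB : ∀ x, ψ (π x) = 0 → x ∈ B) :
    depth (B.map (ψ.comp π)) ≤ depth (B.map π) := by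
  rw [← Subring.map_map]
  refine depth_map_le ψ _ hψ fun y hy => ?_
  obtain ⟨x, rfl⟩ := hπ y
  exact ⟨x, hB x hy, rfl⟩

end Descent

theorem one_le_depth (B : Subring A) : 1 ≤ depth B :=
  le_sInf fun _ ⟨_, hm, hd⟩ => hd ▸ by
    rcases hm with ⟨n, rfl, -⟩ | ⟨n, rfl, -⟩ <;> exact_mod_cast (by omega)

/-- For a chain of ideals `J₀ ⊆ J₁ ⊆ B` of `A`, the depths of the
quotient extensions `B/Jᵢ ⊆ A/Jᵢ` (realized as images of `B` in `A/Jᵢ`) satisfy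
`1 ≤ d(B/J₁, A/J₁) ≤ d(B/J₀, A/J₀) ≤ d(B,A)`. -/
theorem depth_quotient_chain
    (k : Type u) [CommRing k] (A : Type u) [Ring A] [Algebra k A] (B : Subalgebra k A)
    (J0 J1 : TwoSidedIdeal A) (hJ01 : ∀ x ∈ J0, x ∈ J1) (hJ1B : ∀ x ∈ J1, x ∈ B) :
    (1 : ℕ∞) ≤ depth (B.toSubring.map (J1.ringCon.mk' : A →+* J1.ringCon.Quotient)) ∧
    depth (B.toSubring.map (J1.ringCon.mk' : A →+* J1.ringCon.Quotient)) ≤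
      depth (B.toSubring.map (J0.ringCon.mk' : A →+* J0.ringCon.Quotient)) ∧
    depth (B.toSubring.map (J0.ringCon.mk' : A →+* J0.ringCon.Quotient)) ≤
      depth B.toSubring := by
  have hJ : J0.ringCon ≤ J1.ringCon := TwoSidedIdeal.ringCon_le_iff.1 hJ01
  refine ⟨one_le_depth _, ?_, ?_⟩
  · -- `(J0.ringCon.map J1.ringCon hJ).comp J0.ringCon.mk'` is `J1.ringCon.mk'` definitionally
    exact depth_map_map_le _ B.toSubring J0.ringCon.mk'_surjective
      (ψ := J0.ringCon.map J1.ringCon hJ)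
      (RingCon.lift_surjective_of_surjective _ J1.ringCon.mk'_surjective)
      fun x hx => hJ1B x ((RingCon.eq _).1 hx)
  · exact depth_map_le _ B.toSubring J0.ringCon.mk'_surjective
      fun x hx => hJ1B x (hJ01 x ((RingCon.eq _).1 hx))
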